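/- Let G be a group generated by elements h₁,…,h_t with t ≥ 4, and suppose h₁ has order at least 3. Define S = {1, h₁, …, h_t} and T = {h₁h_t, h₁, h₁h₂, h₁h₂h₃, …, h₁h₂⋯h_t}. Then S ∩ T⁻¹ = ∅, provided all the elements 1, h_i are distinct, the h_i are not inverses of elements of T (which follows from the minimality of the generating set and |h₁| ≥ 3 under the paper's hypotheses). Formally: if G has minimal generating set size d(G) = t ≥ 4 with generating set {h₁,…,h_t} and |h₁| ≥ 3, then with S, T as above, S ∩ T⁻¹ = ∅. -/

import Mathlib

private lemma aux_prod_mem {G : Type*} [Group G] {t : ℕ} (h : Fin t → G) (a b : ℕ) (hb : b ≤ t)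
    (N : Subgroup G) (hN : ∀ m : Fin t, a ≤ m.1 → m.1 < b → h m ∈ N) :
    (((List.ofFn h).take b).drop a).prod ∈ N := by
  apply list_prod_mem
  intro x hx
  obtain ⟨i, hi, rfl⟩ := List.mem_iff_getElem.mp hx
  have h1 : i < b - a := by simpa [Nat.min_eq_left hb] using hi
  have h2 : a + i < t := by omega
  have : (((List.ofFn h).take b).drop a)[i] = h ⟨a + i, h2⟩ := by
    simp [List.getElem_drop, List.getElem_take, List.getElem_ofFn]
  rw [this]
  exact hN _ (by simp) (by simp; omega)

private lemma aux_split {G : Type*} [Group G] {t : ℕ} (h : Fin t → G) (k n : ℕ)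
    (hk : k < n) (hn : n ≤ t) :
    ((List.ofFn h).take n).prod =
      ((List.ofFn h).take k).prod * h ⟨k, by omega⟩ *
        ((((List.ofFn h).take n)).drop (k + 1)).prod := by
  set l := List.ofFn h with hl
  have hlen : (l.take n).length = n := by simp [hl]; omega
  have hk' : k < (l.take n).length := by omega
  have h2 : (l.take n).drop k = (l.take n)[k] :: (l.take n).drop (k + 1) :=
    List.drop_eq_getElem_cons hk'
  have h3 : (l.take n).take k = l.take k := by
    rw [List.take_take]; congr 1; omega
  have h4 : (l.take n)[k]'hk' = h ⟨k, by omega⟩ := by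
    simp [hl, List.getElem_take, List.getElem_ofFn]
  conv_lhs => rw [← List.take_append_drop k (l.take n), h2, h3]
  rw [List.prod_append, List.prod_cons, h4, ← mul_assoc]

private lemma aux_solve {G : Type*} [Group G] (A k B X : G) (e : A * k * B = X) :
    k = A⁻¹ * X * B⁻¹ := by
  rw [← e]; group

private lemma aux_take_one {G : Type*} [Group G] {t : ℕ} (ht : 4 ≤ t) (h0 : 0 < t) (h : Fin t → G) :
    ((List.ofFn h).take 1).prod = h ⟨0, h0⟩ := by
  have e : (List.ofFn h).take 1 = [h ⟨0, h0⟩] := by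
    apply List.ext_getElem
    · simp; omega
    · intro n h1 h2
      simp only [List.length_singleton] at h2
      have hn : n = 0 := by omega
      subst hn
      simp only [List.getElem_take, List.getElem_ofFn, List.getElem_cons_zero]
  rw [e, List.prod_singleton]

theorem stmt_7 {G : Type*} [Group G] {t : ℕ} (ht : 4 ≤ t) (h : Fin t → G)
    (hgen : Subgroup.closure (Set.range h) = ⊤)
    (hmin : ∀ s : Finset G, Subgroup.closure (s : Set G) = ⊤ → t ≤ s.card)
    (h1 : 3 ≤ orderOf (h ⟨0, by omega⟩)) :
    let hbar : Fin t → G := fun i => ((List.ofFn h).take (i.1 + 1)).prod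
    let S : Set G := {1} ∪ Set.range h
    let T : Set G := {h ⟨0, by omega⟩ * h ⟨t - 1, by omega⟩} ∪ Set.range hbar
    S ∩ T⁻¹ = ∅ := by
  intro hbar S T
  classical
  -- injectivity of h
  have hc1 : t ≤ (Finset.univ.image h).card := by
    apply hmin
    rw [Finset.coe_image, Finset.coe_univ, Set.image_univ]
    exact hgen
  have hinj : Function.Injective h := by
    have hcard : (Finset.univ.image h).card = (Finset.univ : Finset (Fin t)).card := by
      have h2 : (Finset.univ.image h).card ≤ t := by
        simpa using Finset.card_image_le (s := (Finset.univ : Finset (Fin t))) (f := h)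
      simp only [Finset.card_univ, Fintype.card_fin]
      omega
    have := Finset.card_image_iff.mp hcard
    rw [Finset.coe_univ] at this
    exact Set.injOn_univ.mp this
  -- key minimality lemma
  set N : Fin t → Subgroup G := fun j => Subgroup.closure (h '' {m | m ≠ j}) with hN
  have hmem : ∀ (j m : Fin t), m ≠ j → h m ∈ N j := fun j m hm =>
    Subgroup.subset_closure ⟨m, hm, rfl⟩
  have key : ∀ j : Fin t, h j ∈ N j → False := by
    intro j hj
    set s : Finset G := (Finset.univ.erase j).image h with hs
    have hcoe : (s : Set G) = h '' {m | m ≠ j} := by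
      rw [hs, Finset.coe_image, Finset.coe_erase, Finset.coe_univ]
      ext m; simp
    have htop : Subgroup.closure (s : Set G) = ⊤ := by
      rw [hcoe, eq_top_iff, ← hgen]
      rw [Subgroup.closure_le]
      rintro x ⟨m, rfl⟩
      by_cases hm : m = j
      · subst hm; exact hj
      · exact hmem j m hm
    have hle := hmin s htop
    have hcard : s.card ≤ t - 1 := by
      calc s.card ≤ (Finset.univ.erase j).card := Finset.card_image_le
        _ = t - 1 := by simp
    omega
  -- main argument
  rw [Set.eq_empty_iff_forall_notMem]
  rintro x ⟨hxS, hxT⟩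
  rw [Set.mem_inv] at hxT
  set j0 : Fin t := ⟨0, by omega⟩ with hj0
  set jl : Fin t := ⟨t - 1, by omega⟩ with hjl
  have hne0l : j0 ≠ jl := by simp [hj0, hjl, Fin.ext_iff]; omega
  simp only [S, Set.mem_union, Set.mem_singleton_iff, Set.mem_range] at hxS
  simp only [T, Set.mem_union, Set.mem_singleton_iff, Set.mem_range] at hxT
  rcases hxS with rfl | ⟨j, rfl⟩
  · rcases hxT with hEq | ⟨i, hEq⟩
    · -- 1 = h j0 * h jl
      have e : h j0 * h jl = 1 := by rw [← hEq]; simp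
      have e2 : h jl = (h j0)⁻¹ := by
        apply mul_left_cancel (a := h j0); rw [e]; group
      exact key jl (e2 ▸ (N jl).inv_mem (hmem jl j0 hne0l))
    · -- hbar i = 1
      have e : ((List.ofFn h).take (i.1 + 1)).prod = 1 := by
        rw [show ((List.ofFn h).take (i.1 + 1)).prod = hbar i from rfl, hEq]; simp
      have esp := aux_split h i.1 (i.1 + 1) (by omega) (by omega)
      have e3 := aux_solve _ _ _ _ (esp.symm.trans e)
      have hA : ((List.ofFn h).take i.1).prod ∈ N i := by
        have := aux_prod_mem h 0 i.1 (by omega) (N i)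
          (fun m _ hm2 => hmem i m (by simp [Fin.ext_iff]; omega))
        simpa using this
      have hB : (((List.ofFn h).take (i.1 + 1)).drop (i.1 + 1)).prod ∈ N i := by
        exact aux_prod_mem h (i.1 + 1) (i.1 + 1) (by omega) (N i) (fun m hm1 hm2 => by omega)
      have : h ⟨i.1, by omega⟩ ∈ N i := by
        rw [e3]
        exact mul_mem (mul_mem ((N i).inv_mem hA) (one_mem _)) ((N i).inv_mem hB)
      exact key i (by simpa using this)
  · rcases hxT with hEq | ⟨i, hEq⟩
    · -- (h j)⁻¹ = h j0 * h jl
      replace hEq : (h j)⁻¹ = h j0 * h jl := hEq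
      by_cases hj : j = j0
      · rw [hj] at hEq
        have e2 : h jl = (h j0)⁻¹ * (h j0)⁻¹ := by
          apply mul_left_cancel (a := h j0); rw [← hEq]; group
        exact key jl (e2 ▸ mul_mem ((N jl).inv_mem (hmem jl j0 hne0l))
          ((N jl).inv_mem (hmem jl j0 hne0l)))
      · by_cases hj' : j = jl
        · rw [hj'] at hEq
          have e2 : h j0 = (h jl)⁻¹ * (h jl)⁻¹ := by
            apply mul_right_cancel (b := h jl); rw [← hEq]; group
          exact key j0 (e2 ▸ mul_mem ((N j0).inv_mem (hmem j0 jl hne0l.symm))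
            ((N j0).inv_mem (hmem j0 jl hne0l.symm)))
        · have e2 : h j = (h jl)⁻¹ * (h j0)⁻¹ := by
            rw [← mul_inv_rev, ← hEq, inv_inv]
          exact key j (e2 ▸ mul_mem ((N j).inv_mem (hmem j jl (Ne.symm hj')))
            ((N j).inv_mem (hmem j j0 (Ne.symm hj))))
    · -- hbar i = (h j)⁻¹
      have hEq' : ((List.ofFn h).take (i.1 + 1)).prod = (h j)⁻¹ := hEq
      by_cases hij : i.1 < j.1
      · have hP : ((List.ofFn h).take (i.1 + 1)).prod ∈ N j := by
          have := aux_prod_mem h 0 (i.1 + 1) (by omega) (N j)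
            (fun m _ hm2 => hmem j m (Fin.ne_of_val_ne (show m.1 ≠ j.1 by omega)))
          simpa using this
        have e2 : h j = (((List.ofFn h).take (i.1 + 1)).prod)⁻¹ := by
          rw [hEq', inv_inv]
        exact key j (e2 ▸ (N j).inv_mem hP)
      · by_cases hi0 : i.1 = 0
        · -- then j.1 = 0 too, so (h j0)² = 1, contradicting the order hypothesis
          have hj00 : j = j0 := by simp only [hj0, Fin.ext_iff]; omega
          have e1 : ((List.ofFn h).take 1).prod = h j0 := aux_take_one ht (by omega) h
          rw [hi0, e1, hj00] at hEq'
          have hsq : h j0 ^ 2 = 1 := by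
            rw [pow_two]
            nth_rewrite 1 [hEq']
            group
          have hdvd := orderOf_dvd_of_pow_eq_one hsq
          have hle2 := Nat.le_of_dvd (by norm_num) hdvd
          omega
        · -- pick an index kv ≤ i with kv ≠ j
          obtain ⟨kv, hkvt, hkvi, hkvj⟩ : ∃ kv, kv < t ∧ kv ≤ i.1 ∧ kv ≠ j.1 := by
            by_cases hjz : j.1 = 0
            · exact ⟨1, by omega, by omega, by omega⟩
            · exact ⟨0, by omega, by omega, by omega⟩
          set K : Fin t := ⟨kv, hkvt⟩ with hK
          have esp := aux_split h kv (i.1 + 1) (by omega) (by omega)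
          have e3 := aux_solve _ _ _ _ (esp.symm.trans hEq')
          have hA : ((List.ofFn h).take kv).prod ∈ N K := by
            have := aux_prod_mem h 0 kv (by omega) (N K)
              (fun m _ hm2 => hmem K m (Fin.ne_of_val_ne (show m.1 ≠ kv by omega)))
            simpa using this
          have hB : (((List.ofFn h).take (i.1 + 1)).drop (kv + 1)).prod ∈ N K :=
            aux_prod_mem h (kv + 1) (i.1 + 1) (by omega) (N K)
              (fun m hm1 _ => hmem K m (Fin.ne_of_val_ne (show m.1 ≠ kv by omega)))
          have hX : (h j)⁻¹ ∈ N K :=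
            (N K).inv_mem (hmem K j (Fin.ne_of_val_ne (show j.1 ≠ kv by omega)))
          have hfin : h ⟨kv, by omega⟩ ∈ N K := by
            rw [e3]
            exact mul_mem (mul_mem ((N K).inv_mem hA) hX) ((N K).inv_mem hB)
          exact key K hfin
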